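/- arXiv:0912.3853 — 2 statements merged into one kernel-verified Lean document; each statement's English description precedes it below -/
import Mathlib

section
/- Let $R$ be a Noetherian ring of prime characteristic $p$, and let $\mathfrak{a}, J$ be ideals with $\mathfrak{a}\subseteq\sqrt J$. If for all sufficiently large $q=p^e$ the Frobenius power $J^{[q]}$ is Frobenius closed (i.e. $(J^{[q]})^F = J^{[q]}$), then the limit $\lim_{q\to\infty}\nu_{\mathfrak{a}}^J(q)/q$ exists, i.e. $\limsup_q \nu_{\mathfrak{a}}^J(q)/q = \liminf_q \nu_{\mathfrak{a}}^J(q)/q$. -/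
open Filter

noncomputable section

/-- The `q`-th Frobenius power `J^{[q]}` of an ideal: the ideal generated by
`q`-th powers of elements of `J`. -/
def Ideal.frobPow {R : Type*} [CommSemiring R] (J : Ideal R) (q : ℕ) : Ideal R :=
  Ideal.span ((fun x => x ^ q) '' (J : Set R))

/-- `ν_𝔞^J(q) = max {r | 𝔞^r ⊄ J^{[q]}}` (with value `0` if `𝔞 ⊆ J^{[q]}`). -/
def Ideal.fnu {R : Type*} [CommSemiring R] (𝔞 J : Ideal R) (q : ℕ) : ℕ :=
  sSup {r : ℕ | ¬ 𝔞 ^ r ≤ J.frobPow q}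

/-- `c₊^J(𝔞) = limsup_{q = pᵉ → ∞} ν_𝔞^J(q)/q`. -/
def Ideal.cplus {R : Type*} [CommSemiring R] (𝔞 J : Ideal R) (p : ℕ) : ℝ :=
  Filter.limsup (fun e : ℕ => (𝔞.fnu J (p ^ e) : ℝ) / (p ^ e : ℕ)) Filter.atTop

/-- `c₋^J(𝔞) = liminf_{q = pᵉ → ∞} ν_𝔞^J(q)/q`. -/
def Ideal.cminus {R : Type*} [CommSemiring R] (𝔞 J : Ideal R) (p : ℕ) : ℝ :=
  Filter.liminf (fun e : ℕ => (𝔞.fnu J (p ^ e) : ℝ) / (p ^ e : ℕ)) Filter.atTop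

/-- `x ∈ R°`, i.e. `x` lies outside every minimal prime of `R`. -/
def Ideal.memRcirc {R : Type*} [CommSemiring R] (x : R) : Prop :=
  ∀ P ∈ minimalPrimes R, x ∉ P

/-- The length of an `R`-module `M`, computed as the Krull dimension of its
lattice of submodules (converted to a natural number; `0` by convention in the
degenerate infinite cases). -/
def moduleLength (R M : Type*) [Ring R] [AddCommGroup M] [Module R M] : ℕ :=
  (WithBot.unbotD 0 (Order.krullDim (Submodule R M))).toNat

/-- The Hilbert–Samuel multiplicity of an ideal `I` in a `d`-dimensional ring:
`e(I) = lim_n d! · ℓ(R/Iⁿ)/n^d` (expressed as a `limsup` so as to be total). -/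
def Ideal.eMult {R : Type*} [CommRing R] (d : ℕ) (I : Ideal R) : ℝ :=
  Filter.limsup
    (fun n : ℕ => (d.factorial : ℝ) * (moduleLength R (R ⧸ I ^ n) : ℝ) / (n : ℝ) ^ d)
    Filter.atTop

end

/-!
Frobenius closedness of `J^{[q]}` makes `q ↦ ν(q)/q` eventually monotone along `q = pᵉ`:
if `x ∈ 𝔞^r` avoids `J^{[q]}`, then `x^p ∈ 𝔞^{pr}` avoids `J^{[pq]} ⊆ (J^{[q]})^{[p]}`, since
otherwise `x` would lie in the Frobenius closure `J^{[q]}`. Hence `ν(pq) ≥ p ν(q)`. On the other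
hand `𝔞^N ⊆ J` and `J^{kq+1} ⊆ J^{[q]}` for `J` generated by `k` elements bound `ν(q)/q`,
so the sequence converges.
-/

open Set

theorem limsup_eq_liminf_of_eventually_le_succ {α : Type*} [ConditionallyCompleteLinearOrder α]
    [TopologicalSpace α] [OrderTopology α] {u : ℕ → α}
    (hmono : ∀ᶠ n in atTop, u n ≤ u (n + 1)) (hbdd : BddAbove (range u)) :
    limsup u atTop = liminf u atTop := by
  obtain ⟨E, hE⟩ := eventually_atTop.mp hmono
  have hshift : Monotone fun n => u (n + E) := monotone_nat_of_le_succ fun n => by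
    simpa [Nat.add_right_comm] using hE (n + E) (Nat.le_add_left _ _)
  have hbdd' : BddAbove (range fun n => u (n + E)) :=
    hbdd.mono (range_subset_iff.mpr fun n => mem_range_self _)
  have hlim := (tendsto_add_atTop_iff_nat E).mp (tendsto_atTop_ciSup hshift hbdd')
  exact hlim.limsup_eq.trans hlim.liminf_eq.symm

namespace Ideal

section CommSemiring

variable {R : Type*} [CommSemiring R]

theorem span_pow_card_mul_add_one_le_span_image_pow (q : ℕ) (s : Finset R) :
    span (s : Set R) ^ (s.card * q + 1) ≤ span ((fun x => x ^ q) '' (s : Set R)) := by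
  classical
  induction s using Finset.induction_on with
  | empty => simp
  | @insert a s ha ih =>
    rw [Finset.coe_insert, span_insert, Finset.card_insert_of_notMem ha,
      show (s.card + 1) * q + 1 = q + (s.card * q + 1) by ring]
    refine sup_pow_add_le_pow_sup_pow.trans (sup_le ?_ ?_)
    · rw [span_singleton_pow, span_le, singleton_subset_iff]
      exact subset_span ⟨a, by simp⟩
    · exact ih.trans (span_mono (image_mono (by simp)))

theorem FG.exists_pow_mul_add_one_le_frobPow {J : Ideal R} (hJ : J.FG) :
    ∃ k : ℕ, ∀ q : ℕ, J ^ (k * q + 1) ≤ J.frobPow q := by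
  obtain ⟨s, rfl⟩ := hJ
  exact ⟨s.card, fun q => (span_pow_card_mul_add_one_le_span_image_pow q s).trans
    (span_mono (image_mono subset_span))⟩

theorem frobPow_mul_le_frobPow_frobPow (J : Ideal R) (q n : ℕ) :
    J.frobPow (q * n) ≤ (J.frobPow q).frobPow n := by
  rw [frobPow, span_le]
  rintro _ ⟨y, hy, rfl⟩
  show y ^ (q * n) ∈ _
  rw [pow_mul]
  exact subset_span ⟨y ^ q, subset_span ⟨y, hy, rfl⟩, rfl⟩

variable {𝔞 J : Ideal R} {q : ℕ}

theorem mem_upperBounds_setOf_not_pow_le_frobPow {N : ℕ} (hN : 𝔞 ^ N ≤ J.frobPow q) :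
    N ∈ upperBounds {r : ℕ | ¬ 𝔞 ^ r ≤ J.frobPow q} :=
  fun _ hr => le_of_not_ge fun h => hr ((pow_le_pow_right h).trans hN)

theorem fnu_le_of_pow_le_frobPow {N : ℕ} (hN : 𝔞 ^ N ≤ J.frobPow q) : 𝔞.fnu J q ≤ N :=
  csSup_le' (mem_upperBounds_setOf_not_pow_le_frobPow hN)

theorem not_pow_mul_le_frobPow_mul {n r : ℕ}
    (hclosed : ∀ x : R, x ^ n ∈ (J.frobPow q).frobPow n → x ∈ J.frobPow q)
    (hr : ¬ 𝔞 ^ r ≤ J.frobPow q) : ¬ 𝔞 ^ (n * r) ≤ J.frobPow (q * n) := by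
  intro hle
  obtain ⟨x, hx𝔞, hxJ⟩ := SetLike.not_le_iff_exists.mp hr
  have hxn : x ^ n ∈ 𝔞 ^ (n * r) := by
    rw [mul_comm, pow_mul]
    exact pow_mem_pow hx𝔞 n
  exact hxJ (hclosed x (frobPow_mul_le_frobPow_frobPow J q n (hle hxn)))

theorem mul_fnu_le_fnu_mul {n : ℕ}
    (hclosed : ∀ x : R, x ^ n ∈ (J.frobPow q).frobPow n → x ∈ J.frobPow q)
    (hbdd : BddAbove {r : ℕ | ¬ 𝔞 ^ r ≤ J.frobPow (q * n)}) :
    n * 𝔞.fnu J q ≤ 𝔞.fnu J (q * n) := by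
  -- `fnu` is the junk value `0` when its defining set is empty or unbounded.
  rcases eq_empty_or_nonempty {r : ℕ | ¬ 𝔞 ^ r ≤ J.frobPow q} with hempty | hne
  · simp [fnu, hempty]
  by_cases hbdd_q : BddAbove {r : ℕ | ¬ 𝔞 ^ r ≤ J.frobPow q}
  · exact le_csSup hbdd (not_pow_mul_le_frobPow_mul hclosed (Nat.sSup_mem hne hbdd_q))
  · simp [fnu, Nat.sSup_of_not_bddAbove hbdd_q]

theorem fnu_div_le_fnu_mul_div {n : ℕ} (hq : 0 < q) (hn : 0 < n)
    (hclosed : ∀ x : R, x ^ n ∈ (J.frobPow q).frobPow n → x ∈ J.frobPow q)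
    (hbdd : BddAbove {r : ℕ | ¬ 𝔞 ^ r ≤ J.frobPow (q * n)}) :
    (𝔞.fnu J q : ℝ) / q ≤ (𝔞.fnu J (q * n) : ℝ) / (q * n : ℕ) := by
  have hmul : (n : ℝ) * 𝔞.fnu J q ≤ 𝔞.fnu J (q * n) := by
    exact_mod_cast mul_fnu_le_fnu_mul hclosed hbdd
  rw [div_le_div_iff₀ (by positivity) (by positivity)]
  push_cast
  nlinarith [(Nat.cast_pos (α := ℝ)).mpr hq]

end CommSemiring

theorem exists_pow_mul_le_frobPow {R : Type*} [CommSemiring R] [IsNoetherianRing R]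
    {𝔞 J : Ideal R} (hrad : 𝔞 ≤ J.radical) :
    ∃ C : ℕ, ∀ q : ℕ, 0 < q → 𝔞 ^ (C * q) ≤ J.frobPow q := by
  obtain ⟨N, hN⟩ := exists_pow_le_of_le_radical_of_fg_radical hrad (IsNoetherian.noetherian _)
  obtain ⟨k, hk⟩ := FG.exists_pow_mul_add_one_le_frobPow (IsNoetherian.noetherian J)
  refine ⟨N * (k + 1), fun q hq => ?_⟩
  calc 𝔞 ^ (N * (k + 1) * q) = (𝔞 ^ N) ^ ((k + 1) * q) := by rw [← pow_mul, mul_assoc]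
    _ ≤ J ^ ((k + 1) * q) := pow_right_mono hN _
    _ ≤ J ^ (k * q + 1) := pow_le_pow_right (by nlinarith)
    _ ≤ J.frobPow q := hk q

end Ideal

theorem fthreshold_exists_of_frobClosed_general {R : Type*} [CommRing R] [IsNoetherianRing R]
    (p : ℕ) [Fact p.Prime] (𝔞 J : Ideal R)
    (hrad : 𝔞 ≤ J.radical)
    (hclosed : ∀ᶠ e : ℕ in Filter.atTop, ∀ x : R,
      (∃ e' : ℕ, x ^ p ^ e' ∈ (J.frobPow (p ^ e)).frobPow (p ^ e')) →
        x ∈ J.frobPow (p ^ e)) :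
    𝔞.cplus J p = 𝔞.cminus J p := by
  have hp : 0 < p := (Fact.out : p.Prime).pos
  obtain ⟨C, hC⟩ := Ideal.exists_pow_mul_le_frobPow hrad
  have hbdd (q : ℕ) (hq : 0 < q) : BddAbove {r : ℕ | ¬ 𝔞 ^ r ≤ J.frobPow q} :=
    ⟨_, Ideal.mem_upperBounds_setOf_not_pow_le_frobPow (hC q hq)⟩
  refine limsup_eq_liminf_of_eventually_le_succ (hclosed.mono fun e he => ?_) ⟨C, ?_⟩
  · rw [pow_succ]
    have hclosed_p (x : R) (hx : x ^ p ∈ (J.frobPow (p ^ e)).frobPow p) : x ∈ J.frobPow (p ^ e) :=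
      he x ⟨1, by simpa using hx⟩
    exact Ideal.fnu_div_le_fnu_mul_div (by positivity) hp hclosed_p (hbdd _ (by positivity))
  · rintro _ ⟨e, rfl⟩
    rw [div_le_iff₀ (by positivity)]
    exact_mod_cast Ideal.fnu_le_of_pow_le_frobPow (hC _ (by positivity))

/-- if the Frobenius powers `J^{[q]}` are Frobenius closed for all
large `q = pᵉ`, then the `F`-threshold `lim ν_𝔞^J(q)/q` exists, i.e.
limsup = liminf. -/
theorem fthreshold_exists_of_frobClosed {R : Type*} [CommRing R] [IsNoetherianRing R]
    (p : ℕ) [Fact p.Prime] [CharP R p] (𝔞 J : Ideal R)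
    (hrad : 𝔞 ≤ J.radical)
    (hclosed : ∀ᶠ e : ℕ in Filter.atTop, ∀ x : R,
      (∃ e' : ℕ, x ^ p ^ e' ∈ (J.frobPow (p ^ e)).frobPow (p ^ e')) →
        x ∈ J.frobPow (p ^ e)) :
    𝔞.cplus J p = 𝔞.cminus J p :=
  fthreshold_exists_of_frobClosed_general p 𝔞 J hrad hclosed
end

section
/- Let $R$ be a commutative ring, $J\subseteq R$ an ideal generated by a regular sequence $f_1,\dots,f_d$, and $x_1,\dots,x_i$ elements of $R$ forming a regular sequence. Let $I\subseteq R$ be an ideal, $c\in R$, and suppose $cI\subseteq J$. If the induced map $\mathrm{Tor}_i^R(R/I, R/(x_1,\dots,x_i)) \to \mathrm{Tor}_i^R(R/J, R/(x_1,\dots,x_i))$ given by multiplication by $c$ is zero, then for every element $y\in (I :_R (x_1,\dots,x_i))$ one has $cy \in J$. More precisely, multiplication by $c$ induces the map $(I:_R(x_1,\dots,x_i))/I' \to (J:_R(x_1,\dots,x_i))/J$ on the top Koszul homology, where the Tor modules are computed via the Koszul complex on $x_1,\dots,x_i$. -/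
/-!
For a regular sequence `x`, the Koszul complex `K(x)` is a free resolution of `R/(x)`, so
`Torᵢ(M, R/(x))` is the top homology of `M ⊗ K(x)`. As `K(x)ᵢ₊₁ = 0`, this homology
consists of the cycles of degree `i`, and `m ⊗ e₁ ∧ ⋯ ∧ eᵢ` is such a cycle as soon as
`(x) m = 0`. For `y ∈ (I : (x))` the map induced by `φ` sends the class of `ȳ ⊗ e₁ ∧ ⋯ ∧ eᵢ`
to `c̄y ⊗ e₁ ∧ ⋯ ∧ eᵢ`, and since `K(x)ᵢ` is free on `e₁ ∧ ⋯ ∧ eᵢ` this vanishes only if `cy ∈ J`.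
-/

open CategoryTheory MonoidalCategory

section Sequences

variable {R : Type*} [CommRing R]

theorem Ideal.span_range_eq_span_range_init_sup {n : ℕ} (x : Fin (n + 1) → R) :
    Ideal.span (Set.range x) =
      Ideal.span (Set.range (Fin.init x)) ⊔ Ideal.span {x (Fin.last n)} := by
  conv_lhs => rw [← Fin.snoc_init_self x]
  rw [Fin.range_snoc, Ideal.span_insert, sup_comm]

open RingTheory.Sequence in
theorem RingTheory.Sequence.isWeaklyRegular_ofFn_succ_iff {n : ℕ} (x : Fin (n + 1) → R) :
    IsWeaklyRegular R (List.ofFn x) ↔ IsWeaklyRegular R (List.ofFn (Fin.init x)) ∧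
      IsSMulRegular (R ⧸ Ideal.span (Set.range (Fin.init x))) (x (Fin.last n)) := by
  have hspan : (Ideal.ofList (List.ofFn (Fin.init x)) • ⊤ : Submodule R R) =
      Ideal.span (Set.range (Fin.init x)) := by
    rw [Ideal.smul_eq_mul, Ideal.mul_top]
    simp only [Ideal.ofList, List.mem_ofFn]
    rfl
  rw [List.ofFn_succ', List.concat_eq_append]
  change IsWeaklyRegular R (List.ofFn (Fin.init x) ++ [x (Fin.last n)]) ↔ _
  rw [isWeaklyRegular_append_iff, isWeaklyRegular_singleton_iff, hspan]

theorem RingTheory.Sequence.IsWeaklyRegular.init {n : ℕ} {x : Fin (n + 1) → R}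
    (hx : IsWeaklyRegular R (List.ofFn x)) : IsWeaklyRegular R (List.ofFn (Fin.init x)) :=
  ((isWeaklyRegular_ofFn_succ_iff x).mp hx).1

theorem RingTheory.Sequence.IsWeaklyRegular.mem_span_init_of_last_mul_mem {n : ℕ}
    {x : Fin (n + 1) → R} (hx : IsWeaklyRegular R (List.ofFn x)) {r : R}
    (hr : x (Fin.last n) * r ∈ Ideal.span (Set.range (Fin.init x))) :
    r ∈ Ideal.span (Set.range (Fin.init x)) := by
  have hreg := ((isWeaklyRegular_ofFn_succ_iff x).mp hx).2
  rw [← Ideal.Quotient.eq_zero_iff_mem] at hr ⊢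
  refine hreg ?_
  simpa [Algebra.smul_def] using hr

end Sequences

theorem Submodule.prodMk_mem_ideal_smul_top {R M N : Type*} [CommRing R] [AddCommGroup M]
    [Module R M] [AddCommGroup N] [Module R N] {I : Ideal R} {u : M} {v : N}
    (hu : u ∈ I • (⊤ : Submodule R M)) (hv : v ∈ I • (⊤ : Submodule R N)) :
    (u, v) ∈ I • (⊤ : Submodule R (M × N)) := by
  have hu' := Submodule.smul_mono le_rfl le_top
    ((Submodule.map_smul'' I ⊤ (LinearMap.inl R M N)) ▸ Submodule.mem_map_of_mem hu)
  have hv' := Submodule.smul_mono le_rfl le_top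
    ((Submodule.map_smul'' I ⊤ (LinearMap.inr R M N)) ▸ Submodule.mem_map_of_mem hv)
  simpa using Submodule.add_mem _ hu' hv'

theorem TensorProduct.tmul_eq_zero_of_mem_ideal_smul_top {R M N : Type*} [CommRing R]
    [AddCommGroup M] [Module R M] [AddCommGroup N] [Module R N] {I : Ideal R} {m : M}
    (hm : ∀ r ∈ I, r • m = 0) {n : N} (hn : n ∈ I • (⊤ : Submodule R N)) :
    m ⊗ₜ[R] n = 0 := by
  refine Submodule.smul_induction_on hn (fun r hr n _ => ?_) (fun u v hu hv => ?_)
  · rw [← TensorProduct.smul_tmul, hm r hr, TensorProduct.zero_tmul]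
  · rw [TensorProduct.tmul_add, hu, hv, add_zero]

theorem CategoryTheory.ProjectiveResolution.homologyMap_eq_zero_of_leftDerived_app_eq_zero
    {C D : Type*} [Category C] [Category D] [Abelian C] [HasProjectiveResolutions C] [Abelian D]
    {F G : C ⥤ D} [F.Additive] [G.Additive] {α : F ⟶ G} {X : C} (P : ProjectiveResolution X)
    {n : ℕ} (h : (NatTrans.leftDerived α n).app X = 0) :
    HomologicalComplex.homologyMap ((NatTrans.mapHomologicalComplex α _).app P.complex) n = 0 := by
  rwa [P.leftDerived_app_eq α n, Preadditive.IsIso.comp_left_eq_zero,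
    Preadditive.IsIso.comp_right_eq_zero] at h

universe u in
theorem HomologicalComplex.apply_eq_zero_of_homologyMap_eq_zero {R : Type u} {ι : Type*} [Ring R]
    {c : ComplexShape ι} {C D : HomologicalComplex (ModuleCat.{u} R) c} (f : C ⟶ D) {j : ι}
    (hD : D.d (c.prev j) j = 0) (hf : homologyMap f j = 0) {z : C.X j}
    (hz : C.d j (c.next j) z = 0) : f.f j z = 0 := by
  have hcycles : cyclesMap f j = 0 := by
    have := D.isIso_homologyπ _ j rfl hD
    rw [← cancel_mono (D.homologyπ j), ← homologyπ_naturality, hf, Limits.comp_zero,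
      Limits.zero_comp]
  let g : ModuleCat.of R R ⟶ C.X j := ModuleCat.ofHom (LinearMap.toSpanSingleton R _ z)
  have hg : g ≫ C.d j (c.next j) = 0 := by ext; simp [g, hz]
  have hgf : g ≫ f.f j = 0 := by
    rw [← C.liftCycles_i g _ rfl hg, Category.assoc, ← cyclesMap_i, hcycles, Limits.zero_comp,
      Limits.comp_zero]
  simpa [g] using congr(($hgf).hom 1)

section KoszulModule

variable (R : Type) [CommRing R]

/-- The degree-`k` term of the Koszul complex on `n` elements, built as an iterated mapping cone:
`K(x₁,…,xₙ)ₖ = K(x₁,…,xₙ₋₁)ₖ × K(x₁,…,xₙ₋₁)ₖ₋₁`. -/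
def KoszulModule : ℕ → ℕ → Type
  | 0, 0 => R
  | 0, _ + 1 => PUnit
  | n + 1, 0 => KoszulModule n 0
  | n + 1, k + 1 => KoszulModule n (k + 1) × KoszulModule n k

namespace KoszulModule

instance instAddCommGroup : ∀ n k, AddCommGroup (KoszulModule R n k)
  | 0, 0 => inferInstanceAs (AddCommGroup R)
  | 0, _ + 1 => inferInstanceAs (AddCommGroup PUnit)
  | n + 1, 0 => instAddCommGroup n 0
  | n + 1, k + 1 =>
    letI := instAddCommGroup n (k + 1); letI := instAddCommGroup n k
    inferInstanceAs (AddCommGroup (KoszulModule R n (k + 1) × KoszulModule R n k))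

instance instModule : ∀ n k, Module R (KoszulModule R n k)
  | 0, 0 => inferInstanceAs (Module R R)
  | 0, _ + 1 => inferInstanceAs (Module R PUnit)
  | n + 1, 0 => instModule n 0
  | n + 1, k + 1 =>
    letI := instModule n (k + 1); letI := instModule n k
    inferInstanceAs (Module R (KoszulModule R n (k + 1) × KoszulModule R n k))

instance instFree : ∀ n k, Module.Free R (KoszulModule R n k)
  | 0, 0 => inferInstanceAs (Module.Free R R)
  | 0, _ + 1 => inferInstanceAs (Module.Free R PUnit)
  | n + 1, 0 => instFree n 0
  | n + 1, k + 1 =>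
    letI := instFree n (k + 1); letI := instFree n k
    inferInstanceAs (Module.Free R (KoszulModule R n (k + 1) × KoszulModule R n k))

omit [CommRing R] in
theorem subsingleton_of_lt : ∀ {n k : ℕ}, n < k → Subsingleton (KoszulModule R n k)
  | 0, _ + 1, _ => inferInstanceAs (Subsingleton PUnit)
  | n + 1, k + 1, h =>
    have := subsingleton_of_lt (n := n) (k := k + 1) (by omega)
    have := subsingleton_of_lt (n := n) (k := k) (by omega)
    inferInstanceAs (Subsingleton (KoszulModule R n (k + 1) × KoszulModule R n k))

instance (n : ℕ) : Subsingleton (KoszulModule R n (n + 1)) :=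
  subsingleton_of_lt R (Nat.lt_succ_self n)

def zeroEquiv : ∀ n, KoszulModule R n 0 ≃ₗ[R] R
  | 0 => LinearEquiv.refl R R
  | n + 1 => zeroEquiv n

/-- The generator `e₁ ∧ ⋯ ∧ eₙ` of the top degree. -/
def top : ∀ n, KoszulModule R n n
  | 0 => (1 : R)
  | n + 1 => (0, top n)

def topCoeff : ∀ n, KoszulModule R n n →ₗ[R] R
  | 0 => zeroEquiv R 0
  | n + 1 => topCoeff n ∘ₗ LinearMap.snd R (KoszulModule R n (n + 1)) (KoszulModule R n n)

@[simp]
theorem topCoeff_top : ∀ n, topCoeff R n (top R n) = 1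
  | 0 => rfl
  | n + 1 => topCoeff_top n

end KoszulModule

variable {R}

open KoszulModule

def koszulDiff :
    ∀ {n : ℕ}, (Fin n → R) → (k : ℕ) → KoszulModule R n (k + 1) →ₗ[R] KoszulModule R n k
  | 0, _, _ => 0
  | n + 1, x, 0 => (koszulDiff (Fin.init x) 0).coprod (x (Fin.last n) • LinearMap.id)
  | n + 1, x, k + 1 =>
    ((koszulDiff (Fin.init x) (k + 1)).coprod (x (Fin.last n) • LinearMap.id)).prod
      (-(koszulDiff (Fin.init x) k) ∘ₗ LinearMap.snd R _ _)

theorem koszulDiff_succ_zero {n : ℕ} (x : Fin (n + 1) → R) (a : KoszulModule R n 1)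
    (b : KoszulModule R n 0) :
    koszulDiff x 0 (a, b) = koszulDiff (Fin.init x) 0 a + x (Fin.last n) • b :=
  rfl

theorem koszulDiff_succ_succ {n : ℕ} (x : Fin (n + 1) → R) (k : ℕ)
    (a : KoszulModule R n (k + 2)) (b : KoszulModule R n (k + 1)) :
    koszulDiff x (k + 1) (a, b) =
      (koszulDiff (Fin.init x) (k + 1) a + x (Fin.last n) • b, -koszulDiff (Fin.init x) k b) :=
  rfl

theorem koszulDiff_koszulDiff :
    ∀ {n : ℕ} (x : Fin n → R) (k : ℕ) (z : KoszulModule R n (k + 2)),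
      koszulDiff x k (koszulDiff x (k + 1) z) = 0
  | 0, _, _, _ => rfl
  | n + 1, x, 0, (a, b) => by
    rw [koszulDiff_succ_succ, koszulDiff_succ_zero, map_add, koszulDiff_koszulDiff, map_smul,
      zero_add, smul_neg]
    exact add_neg_cancel _
  | n + 1, x, k + 1, (a, b) => by
    rw [koszulDiff_succ_succ, koszulDiff_succ_succ, map_add, koszulDiff_koszulDiff, map_smul,
      map_neg, koszulDiff_koszulDiff, zero_add, smul_neg]
    refine Prod.ext (add_neg_cancel _) ?_
    simp only [neg_neg]
    rfl

end KoszulModule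

section KoszulHomology

variable {R : Type} [CommRing R]

open KoszulModule RingTheory.Sequence

theorem range_koszulDiff_zero : ∀ {n : ℕ} (x : Fin n → R),
    LinearMap.range ((zeroEquiv R n).toLinearMap ∘ₗ koszulDiff x 0) = Ideal.span (Set.range x)
  | 0, x => by
    rw [Set.range_eq_empty, Ideal.span_empty]
    exact LinearMap.range_zero
  | n + 1, x => by
    have hlast :
        LinearMap.range ((zeroEquiv R n).toLinearMap ∘ₗ (x (Fin.last n) • LinearMap.id)) =
          Ideal.span {x (Fin.last n)} := by
      rw [Ideal.span, LinearMap.span_singleton_eq_range, ← LinearMap.range_comp_of_range_eq_top _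
        (zeroEquiv R n).range]
      congr 1
      ext b
      simp [mul_comm]
    rw [Ideal.span_range_eq_span_range_init_sup, ← range_koszulDiff_zero (Fin.init x), ← hlast,
      ← LinearMap.range_coprod, ← LinearMap.comp_coprod]
    rfl

theorem ker_koszulDiff_le_range :
    ∀ {n : ℕ} {x : Fin n → R}, IsWeaklyRegular R (List.ofFn x) → ∀ k,
      LinearMap.ker (koszulDiff x k) ≤ LinearMap.range (koszulDiff x (k + 1))
  | 0, _, _, k, z, _ => by
    have := subsingleton_of_lt R (Nat.succ_pos k)
    exact ⟨0, Subsingleton.elim _ _⟩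
  | n + 1, x, hx, 0, (a, b), hz => by
    replace hz : koszulDiff (Fin.init x) 0 a + x (Fin.last n) • b = 0 := hz
    obtain ⟨b₁, rfl⟩ : b ∈ LinearMap.range (koszulDiff (Fin.init x) 0) := by
      have hb : zeroEquiv R n b ∈ Ideal.span (Set.range (Fin.init x)) := by
        refine hx.mem_span_init_of_last_mul_mem ?_
        rw [← range_koszulDiff_zero]
        refine ⟨-a, ?_⟩
        simp [← smul_eq_mul, ← map_smul, eq_neg_of_add_eq_zero_right hz]
      rw [← range_koszulDiff_zero] at hb
      obtain ⟨b₁, hb₁⟩ := hb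
      exact ⟨b₁, (zeroEquiv R n).injective hb₁⟩
    obtain ⟨a₁, ha₁⟩ := ker_koszulDiff_le_range hx.init 0
      (show koszulDiff (Fin.init x) 0 (a + x (Fin.last n) • b₁) = 0 by rwa [map_add, map_smul])
    refine ⟨(a₁, -b₁), ?_⟩
    rw [koszulDiff_succ_succ, ha₁]
    exact Prod.ext (by simp) (by simp)
  | n + 1, x, hx, k + 1, (a, b), hz => by
    have ha : koszulDiff (Fin.init x) (k + 1) a + x (Fin.last n) • b = 0 := congrArg Prod.fst hz
    have hb : koszulDiff (Fin.init x) k b = 0 := neg_eq_zero.mp (congrArg Prod.snd hz)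
    obtain ⟨b₁, rfl⟩ := ker_koszulDiff_le_range hx.init k hb
    obtain ⟨a₁, ha₁⟩ := ker_koszulDiff_le_range hx.init (k + 1)
      (show koszulDiff (Fin.init x) (k + 1) (a + x (Fin.last n) • b₁) = 0 by
        rwa [map_add, map_smul])
    refine ⟨(a₁, -b₁), ?_⟩
    rw [koszulDiff_succ_succ, ha₁]
    exact Prod.ext (by simp) (by simp)

theorem koszulDiff_top_mem_ideal_smul_top : ∀ {n : ℕ} (x : Fin (n + 1) → R),
    koszulDiff x n (top R (n + 1)) ∈ Ideal.span (Set.range x) • (⊤ : Submodule R _)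
  | 0, x => by
    rw [show top R 1 = (0, top R 0) from rfl, koszulDiff_succ_zero]
    exact Submodule.add_mem _ (Submodule.zero_mem _)
      (Submodule.smul_mem_smul (Ideal.subset_span ⟨_, rfl⟩) Submodule.mem_top)
  | n + 1, x => by
    rw [show top R (n + 2) = (0, top R (n + 1)) from rfl, koszulDiff_succ_succ, map_zero]
    refine Submodule.prodMk_mem_ideal_smul_top (Submodule.add_mem _ (Submodule.zero_mem _)
      (Submodule.smul_mem_smul (Ideal.subset_span ⟨_, rfl⟩) Submodule.mem_top))
      (Submodule.neg_mem _ ?_)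
    refine Submodule.smul_mono_left (Ideal.span_mono ?_) (koszulDiff_top_mem_ideal_smul_top _)
    rintro _ ⟨j, rfl⟩
    exact ⟨j.castSucc, rfl⟩

theorem KoszulModule.eq_zero_of_tmul_top_eq_zero {M : Type*} [AddCommGroup M] [Module R M]
    {n : ℕ} {m : M} (h : m ⊗ₜ[R] top R n = 0) : m = 0 := by
  simpa using congrArg (TensorProduct.rid R M ∘ LinearMap.lTensor M (topCoeff R n)) h

end KoszulHomology

section KoszulComplex

variable {R : Type} [CommRing R]

open KoszulModule

noncomputable def koszulComplex {n : ℕ} (x : Fin n → R) : ChainComplex (ModuleCat R) ℕ :=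
  ChainComplex.of (fun k => ModuleCat.of R (KoszulModule R n k))
    (fun k => ModuleCat.ofHom (koszulDiff x k))
    (fun k => by ext z; exact koszulDiff_koszulDiff x k z)

theorem koszulComplex_d {n : ℕ} (x : Fin n → R) (k : ℕ) :
    (koszulComplex x).d (k + 1) k = ModuleCat.ofHom (koszulDiff x k) := by
  simp [koszulComplex]

instance {n : ℕ} (x : Fin n → R) (k : ℕ) : Projective ((koszulComplex x).X k) :=
  (IsProjective.iff_projective (KoszulModule R n k)).mp inferInstance

noncomputable def koszulAugmentation {n : ℕ} (x : Fin n → R) :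
    ModuleCat.of R (KoszulModule R n 0) ⟶ ModuleCat.of R (R ⧸ Ideal.span (Set.range x)) :=
  ModuleCat.ofHom ((Ideal.span (Set.range x)).mkQ ∘ₗ (zeroEquiv R n).toLinearMap)

theorem koszulAugmentation_surjective {n : ℕ} (x : Fin n → R) :
    Function.Surjective (koszulAugmentation x) :=
  (Submodule.mkQ_surjective _).comp (zeroEquiv R n).surjective

theorem ker_koszulAugmentation {n : ℕ} (x : Fin n → R) :
    LinearMap.ker (koszulAugmentation x).hom = LinearMap.range (koszulDiff x 0) := by
  ext z
  rw [LinearMap.mem_ker, koszulAugmentation, ModuleCat.hom_ofHom, LinearMap.comp_apply,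
    Submodule.mkQ_apply, Submodule.Quotient.mk_eq_zero, ← range_koszulDiff_zero,
    LinearMap.range_comp, Submodule.mem_map_equiv]
  simp

theorem koszulComplex_exactAt_succ {n : ℕ} {x : Fin n → R}
    (hx : RingTheory.Sequence.IsWeaklyRegular R (List.ofFn x)) (k : ℕ) :
    (koszulComplex x).ExactAt (k + 1) := by
  rw [HomologicalComplex.exactAt_iff' _ (k + 2) (k + 1) k (by simp) (by simp),
    ShortComplex.moduleCat_exact_iff_ker_sub_range]
  simp only [HomologicalComplex.shortComplexFunctor'_obj_f,
    HomologicalComplex.shortComplexFunctor'_obj_g, koszulComplex_d]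
  exact ker_koszulDiff_le_range hx k

noncomputable def koszulResolution {n : ℕ} (x : Fin n → R)
    (hx : RingTheory.Sequence.IsWeaklyRegular R (List.ofFn x)) :
    ProjectiveResolution (ModuleCat.of R (R ⧸ Ideal.span (Set.range x))) where
  complex := koszulComplex x
  π := (ChainComplex.toSingle₀Equiv _ _).symm ⟨koszulAugmentation x, by
    ext z
    simp only [koszulComplex_d, koszulAugmentation]
    exact (LinearMap.mem_ker.mp ((ker_koszulAugmentation x).ge ⟨z, rfl⟩))⟩
  quasiIso := ⟨fun k => by
    cases k with
    | zero =>
      rw [ChainComplex.quasiIsoAt₀_iff, ShortComplex.quasiIso_iff_of_zeros' _ rfl rfl rfl]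
      refine ⟨?_, (ModuleCat.epi_iff_surjective _).mpr (koszulAugmentation_surjective x)⟩
      rw [ShortComplex.moduleCat_exact_iff]
      intro z hz
      obtain ⟨w, rfl⟩ : z ∈ LinearMap.range (koszulDiff x 0) :=
        (ker_koszulAugmentation x).le hz
      refine ⟨w, ?_⟩
      simp only [HomologicalComplex.shortComplexFunctor'_obj_f, koszulComplex_d]
      rfl
    | succ k =>
      rw [quasiIsoAt_iff_exactAt' (hL := ChainComplex.exactAt_succ_single_obj ..)]
      exact koszulComplex_exactAt_succ hx k⟩

theorem apply_eq_zero_of_homologyMap_tensorKoszulComplex_eq_zero {n : ℕ} (x : Fin n → R)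
    {M₁ M₂ : ModuleCat R} (φ : M₁ ⟶ M₂)
    (hφ : HomologicalComplex.homologyMap ((NatTrans.mapHomologicalComplex
      ((tensoringLeft (ModuleCat R)).map φ) _).app (koszulComplex x)) n = 0)
    {m : M₁} (hm : ∀ r ∈ Ideal.span (Set.range x), r • m = 0) : φ m = 0 := by
  have hD : (((tensoringLeft (ModuleCat R)).obj M₂).mapHomologicalComplex _ |>.obj
      (koszulComplex x)).d ((ComplexShape.down ℕ).prev n) n = 0 := by
    rw [ChainComplex.prev]
    exact (@ModuleCat.isZero_of_subsingleton _ _ _ (inferInstanceAs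
      (Subsingleton (TensorProduct R M₂ (KoszulModule R n (n + 1)))))).eq_of_src _ _
  have hz : (((tensoringLeft (ModuleCat R)).obj M₁).mapHomologicalComplex _ |>.obj
      (koszulComplex x)).d n ((ComplexShape.down ℕ).next n) (m ⊗ₜ top R n) = 0 := by
    cases n with
    | zero => rw [HomologicalComplex.shape _ _ _ (by simp)]; rfl
    | succ k =>
      rw [ChainComplex.next_nat_succ]
      simp only [Functor.mapHomologicalComplex_obj_d, koszulComplex_d]
      exact (ModuleCat.MonoidalCategory.whiskerLeft_apply M₁ _ m _).trans
        (TensorProduct.tmul_eq_zero_of_mem_ideal_smul_top hm (koszulDiff_top_mem_ideal_smul_top x))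
  refine eq_zero_of_tmul_top_eq_zero (R := R) (n := n) ?_
  exact (ModuleCat.MonoidalCategory.whiskerRight_apply φ _ m (top R n)).symm.trans
    (HomologicalComplex.apply_eq_zero_of_homologyMap_eq_zero _ hD hφ hz)

end KoszulComplex

theorem tor_vanishing_colon_general {R : Type} [CommRing R] (i : ℕ)
    (x : Fin i → R)
    (hx : RingTheory.Sequence.IsRegular R (List.ofFn x))
    (J : Ideal R)
    (I : Ideal R) (c : R)
    (φ : (R ⧸ I) →ₗ[R] (R ⧸ J))
    (hφ : ∀ r : R, φ (Ideal.Quotient.mk I r) = Ideal.Quotient.mk J (c * r))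
    (htor : ((Tor (ModuleCat R) i).map (ModuleCat.ofHom φ)).app
        (ModuleCat.of R (R ⧸ Ideal.span (Set.range x))) = 0) :
    ∀ y ∈ Submodule.colon (I : Submodule R R) (Ideal.span (Set.range x) : Submodule R R),
      c * y ∈ J := by
  intro y hy
  rw [← Ideal.Quotient.eq_zero_iff_mem, ← hφ]
  refine apply_eq_zero_of_homologyMap_tensorKoszulComplex_eq_zero x (ModuleCat.ofHom φ)
    ((koszulResolution x hx.toIsWeaklyRegular).homologyMap_eq_zero_of_leftDerived_app_eq_zero htor)
    fun r hr => ?_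
  change Ideal.Quotient.mk I (r * y) = 0
  rw [Ideal.Quotient.eq_zero_iff_mem, mul_comm]
  exact Submodule.mem_colon.mp hy r hr

/-- if `J` is generated by a regular sequence, `x₁,…,xᵢ` is a regular
sequence, `cI ⊆ J`, and the map `Torᵢ(R/I, R/(x₁,…,xᵢ)) → Torᵢ(R/J, R/(x₁,…,xᵢ))`
induced by multiplication by `c` is zero, then `c·(I :_R (x₁,…,xᵢ)) ⊆ J`. -/
theorem tor_vanishing_colon {R : Type} [CommRing R] (d i : ℕ)
    (f : Fin d → R) (x : Fin i → R)
    (hf : RingTheory.Sequence.IsRegular R (List.ofFn f))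
    (hx : RingTheory.Sequence.IsRegular R (List.ofFn x))
    (J : Ideal R) (hJ : J = Ideal.span (Set.range f))
    (I : Ideal R) (c : R) (hcI : ∀ y ∈ I, c * y ∈ J)
    (φ : (R ⧸ I) →ₗ[R] (R ⧸ J))
    (hφ : ∀ r : R, φ (Ideal.Quotient.mk I r) = Ideal.Quotient.mk J (c * r))
    (htor : ((Tor (ModuleCat R) i).map (ModuleCat.ofHom φ)).app
        (ModuleCat.of R (R ⧸ Ideal.span (Set.range x))) = 0) :
    ∀ y ∈ Submodule.colon (I : Submodule R R) (Ideal.span (Set.range x) : Submodule R R),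
      c * y ∈ J :=
  tor_vanishing_colon_general i x hx J I c φ hφ htor
end
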